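/- Let f ∈ W(ℝ, ℝ) be equi-Weyl almost periodic. Then for any a ∈ ℝ and ε > 0 there exists a measurable set T ⊆ ℝ whose characteristic function χ_T belongs to W₁(ℝ, ℝ), such that f(t) < a + ε for all t ∈ T and f(t) > a for almost every t ∈ ℝ \ T. -/

import Mathlib

open MeasureTheory

/-- A set `T ⊆ ℝ` is relatively dense. -/
def RelDense (T : Set ℝ) : Prop :=
  ∃ a > (0 : ℝ), ∀ ξ : ℝ, ∃ τ ∈ T, ξ ≤ τ ∧ τ ≤ ξ + a

/-- `f ∈ W(ℝ,ℝ)`: equi-Weyl a.p. w.r.t. the truncated metric `min 1 |x−y|`. -/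
def WAPr (f : ℝ → ℝ) : Prop :=
  AEStronglyMeasurable f volume ∧
    ∀ ε > (0 : ℝ), ∃ l > (0 : ℝ), RelDense {τ : ℝ |
      (⨆ ξ : ℝ, (1 / l) * ∫ t in ξ..(ξ + l), min 1 |f t - f (t + τ)|) < ε}

/-- `f ∈ W₁(ℝ,ℝ)`: equi-Weyl a.p. of degree 1. -/
def W1APr (f : ℝ → ℝ) : Prop :=
  AEStronglyMeasurable f volume ∧
    (∃ C : ℝ, ∀ ξ : ℝ, (∫ t in ξ..(ξ + 1), |f t|) ≤ C) ∧
    ∀ ε > (0 : ℝ), ∃ l > (0 : ℝ), RelDense {τ : ℝ |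
      (⨆ ξ : ℝ, (1 / l) * ∫ t in ξ..(ξ + l), |f t - f (t + τ)|) < ε}

/-!
Replace `f` by a measurable representative `g`. Call a level `c` thin if for every `η > 0` some
band `(c - δ, c + δ)` is visited by `g` on at most a fraction `η` of `[0, s]`, for arbitrarily
large `s`. For small `δ` the bands around finitely many distinct levels are disjoint, so for a
fixed `η` only finitely many levels can fail this; hence all but countably many levels are thin,
and we take `T = {g < c}` for a thin `c ∈ (a, a + ε)`, cut down to a conull set where `f = g`.

The indicators of `T` at `t` and `t + τ` can only differ if `g t` or `g (t + τ)` lies in the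
`δ`-band around `c`, or if `|g t - g (t + τ)| ≥ δ`. For an almost period `τ` of `g` the last
event has small density by Markov's inequality, and translating by almost periods carries the
small band density of the single window `[0, s]` over to every window of comparable length.
-/

open Filter Set intervalIntegral Metric Topology

lemma RelDense.mono {S S' : Set ℝ} (h : S ⊆ S') (hS : RelDense S) : RelDense S' := by
  obtain ⟨L, hL, hS⟩ := hS
  exact ⟨L, hL, fun ξ => (hS ξ).imp fun τ ⟨hτ, hτL⟩ => ⟨h hτ, hτL⟩⟩

lemma ae_eq_comp_add_right {f g : ℝ → ℝ} (h : f =ᵐ[volume] g) (τ : ℝ) :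
    (fun t => f (t + τ)) =ᵐ[volume] fun t => g (t + τ) :=
  (measurePreserving_add_right volume τ).quasiMeasurePreserving.ae_eq_comp h

lemma aestronglyMeasurable_comp_add_right {f : ℝ → ℝ} (hf : AEStronglyMeasurable f volume)
    (τ : ℝ) : AEStronglyMeasurable (fun t => f (t + τ)) volume :=
  hf.comp_quasiMeasurePreserving (measurePreserving_add_right volume τ).quasiMeasurePreserving

lemma intervalIntegrable_of_abs_le {h : ℝ → ℝ} (hm : AEStronglyMeasurable h volume) {M : ℝ}
    (hb : ∀ t, |h t| ≤ M) (x y : ℝ) : IntervalIntegrable h volume x y :=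
  intervalIntegrable_const.mono_fun' hm.restrict (Eventually.of_forall fun t => by simpa using hb t)

lemma intervalIntegrable_min_one_abs_sub {u v : ℝ → ℝ} (hu : AEStronglyMeasurable u volume)
    (hv : AEStronglyMeasurable v volume) (x y : ℝ) :
    IntervalIntegrable (fun t => min 1 |u t - v t|) volume x y :=
  intervalIntegrable_of_abs_le (by fun_prop) (M := 1)
    (fun t => by rw [abs_of_nonneg (by positivity)]; exact min_le_left _ _) x y

lemma indicator_one_nonneg (s : Set ℝ) (x : ℝ) : 0 ≤ s.indicator (1 : ℝ → ℝ) x :=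
  indicator_nonneg (fun _ _ => zero_le_one) x

lemma indicator_one_le_one (s : Set ℝ) (x : ℝ) : s.indicator (1 : ℝ → ℝ) x ≤ 1 :=
  indicator_apply_le' (fun _ => le_rfl) fun _ => zero_le_one

lemma intervalIntegrable_indicator_comp {g : ℝ → ℝ} (hg : Measurable g) {s : Set ℝ}
    (hs : MeasurableSet s) (x y : ℝ) :
    IntervalIntegrable (fun t => s.indicator (1 : ℝ → ℝ) (g t)) volume x y :=
  intervalIntegrable_of_abs_le ((measurable_one.indicator hs).comp hg).aestronglyMeasurable
    (fun t => abs_le.2 ⟨neg_one_lt_zero.le.trans (indicator_one_nonneg s (g t)),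
      indicator_one_le_one s (g t)⟩)
    x y

lemma integral_le_nat_mul_of_forall_integral_le {h : ℝ → ℝ}
    (hi : ∀ x y, IntervalIntegrable h volume x y) {l B : ℝ}
    (hB : ∀ ξ, ∫ t in ξ..ξ + l, h t ≤ B) (ξ : ℝ) (n : ℕ) :
    ∫ t in ξ..ξ + n * l, h t ≤ n * B := by
  induction n with
  | zero => simp
  | succ n ih =>
    rw [← integral_add_adjacent_intervals (hi ξ (ξ + n * l)) (hi _ _), Nat.cast_succ,
      show ξ + (n + 1) * l = ξ + n * l + l by ring]
    linarith [hB (ξ + n * l)]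

lemma integral_le_two_mul_of_forall_integral_le {h : ℝ → ℝ} (h0 : ∀ t, 0 ≤ h t)
    (hi : ∀ x y, IntervalIntegrable h volume x y) {l₁ θ : ℝ} (hl₁ : 0 < l₁) (hθ : 0 ≤ θ)
    (hB : ∀ ξ, ∫ t in ξ..ξ + l₁, h t ≤ θ * l₁) {l : ℝ} (hl : l₁ ≤ l) (ξ : ℝ) :
    ∫ t in ξ..ξ + l, h t ≤ 2 * θ * l := by
  set n := ⌈l / l₁⌉₊
  have hn₁ : l ≤ n * l₁ := (div_le_iff₀ hl₁).1 (Nat.le_ceil _)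
  have hn₂ : n * l₁ ≤ 2 * l := by
    have h := mul_lt_mul_of_pos_right
      (Nat.ceil_lt_add_one (div_nonneg (hl₁.le.trans hl) hl₁.le)) hl₁
    rw [add_mul, div_mul_cancel₀ _ hl₁.ne'] at h
    linarith
  calc ∫ t in ξ..ξ + l, h t ≤ ∫ t in ξ..ξ + n * l₁, h t :=
        integral_mono_interval le_rfl (by linarith) (by linarith) (Eventually.of_forall h0)
          (hi _ _)
    _ ≤ n * (θ * l₁) := integral_le_nat_mul_of_forall_integral_le hi hB ξ n
    _ ≤ 2 * θ * l := by nlinarith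

lemma WAPr.congr_ae {f g : ℝ → ℝ} (hf : WAPr f) (hfg : f =ᵐ[volume] g) : WAPr g := by
  have hshift : ∀ τ ξ l, ∫ t in ξ..ξ + l, min 1 |g t - g (t + τ)|
      = ∫ t in ξ..ξ + l, min 1 |f t - f (t + τ)| := fun τ ξ l =>
    integral_congr_ae <| by
      filter_upwards [hfg, ae_eq_comp_add_right hfg τ] with t h₀ hτ _ using by rw [h₀, hτ]
  refine ⟨hf.1.congr hfg, fun ε hε => ?_⟩
  simpa only [hshift] using hf.2 ε hε

lemma W1APr.congr_ae {f g : ℝ → ℝ} (hf : W1APr f) (hfg : f =ᵐ[volume] g) : W1APr g := by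
  have hshift : ∀ τ ξ l, ∫ t in ξ..ξ + l, |g t - g (t + τ)| = ∫ t in ξ..ξ + l, |f t - f (t + τ)| :=
    fun τ ξ l => integral_congr_ae <| by
      filter_upwards [hfg, ae_eq_comp_add_right hfg τ] with t h₀ hτ _ using by rw [h₀, hτ]
  have hmass : ∀ ξ, ∫ t in ξ..ξ + 1, |g t| = ∫ t in ξ..ξ + 1, |f t| := fun ξ =>
    integral_congr_ae <| by filter_upwards [hfg] with t h₀ _ using by rw [h₀]
  obtain ⟨hm, hC, hap⟩ := hf
  refine ⟨hm.congr hfg, ?_, fun ε hε => ?_⟩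
  · simpa only [hmass] using hC
  · simpa only [hshift] using hap ε hε

lemma WAPr.exists_relDense_integral_le {f : ℝ → ℝ} (hf : WAPr f) {θ : ℝ} (hθ : 0 < θ) :
    ∃ l₁ > 0, RelDense {τ | ∀ l ≥ l₁, ∀ ξ,
      ∫ t in ξ..ξ + l, min 1 |f t - f (t + τ)| ≤ 2 * θ * l} := by
  obtain ⟨l₁, hl₁, hS⟩ := hf.2 θ hθ
  refine ⟨l₁, hl₁, hS.mono fun τ hτ l hl ξ => ?_⟩
  have hi := intervalIntegrable_min_one_abs_sub hf.1 (aestronglyMeasurable_comp_add_right hf.1 τ)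
  refine integral_le_two_mul_of_forall_integral_le (fun t => by positivity) hi hl₁ hθ.le
    (fun ζ => ?_) hl ξ
  have hle : ∀ ζ, ∫ t in ζ..ζ + l₁, min 1 |f t - f (t + τ)| ≤ l₁ := fun ζ =>
    (integral_mono (by linarith) (hi _ _) intervalIntegrable_const fun t => min_le_left _ _).trans
      (by simp)
  have hbdd : BddAbove (range fun ζ => 1 / l₁ * ∫ t in ζ..ζ + l₁, min 1 |f t - f (t + τ)|) :=
    ⟨1, forall_mem_range.2 fun ζ => by rw [one_div, inv_mul_le_iff₀ hl₁]; simpa using hle ζ⟩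
  have := (le_ciSup hbdd ζ).trans_lt hτ
  rw [one_div, inv_mul_lt_iff₀ hl₁] at this
  linarith

lemma W1APr.of_forall_integral_le {h : ℝ → ℝ} (hm : AEStronglyMeasurable h volume) {M : ℝ}
    (hM : ∀ t, |h t| ≤ M)
    (hap : ∀ ε > 0, ∃ l > 0, RelDense {τ | ∀ ξ, ∫ t in ξ..ξ + l, |h t - h (t + τ)| ≤ ε * l}) :
    W1APr h := by
  refine ⟨hm, ⟨M, fun ξ => ?_⟩, fun ε hε => ?_⟩
  · calc ∫ t in ξ..ξ + 1, |h t| ≤ ∫ _ in ξ..ξ + 1, M :=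
          integral_mono_on (by linarith) (intervalIntegrable_of_abs_le hm hM _ _).abs
            intervalIntegrable_const fun t _ => hM t
      _ = M := by simp
  · obtain ⟨l, hl, hS⟩ := hap (ε / 2) (half_pos hε)
    refine ⟨l, hl, hS.mono fun τ hτ => ?_⟩
    calc ⨆ ξ, 1 / l * ∫ t in ξ..ξ + l, |h t - h (t + τ)| ≤ ε / 2 :=
          Real.iSup_le (fun ξ => by rw [one_div, inv_mul_le_iff₀ hl]; linarith [hτ ξ])
            (by positivity)
      _ < ε := half_lt_self hε

lemma one_le_inv_min_one_mul_min_one {δ d : ℝ} (hδ : 0 < δ) (h : δ ≤ d) :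
    1 ≤ (min 1 δ)⁻¹ * min 1 d := by
  rw [inv_mul_eq_div, one_le_div (by positivity)]
  exact min_le_min_left 1 h

lemma indicator_ball_le {c δ : ℝ} (hδ : 0 < δ) (x y : ℝ) :
    (ball c δ).indicator (1 : ℝ → ℝ) x
      ≤ (ball c (2 * δ)).indicator 1 y + (min 1 δ)⁻¹ * min 1 |x - y| := by
  have hK : 0 ≤ (min 1 δ)⁻¹ * min 1 |x - y| := by positivity
  have hy := indicator_one_nonneg (ball c (2 * δ)) y
  refine indicator_apply_le' (fun hx => ?_) fun _ => by linarith
  rw [Pi.one_apply]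
  by_cases hxy : δ ≤ |x - y|
  · linarith [one_le_inv_min_one_mul_min_one hδ hxy]
  · rw [not_le, abs_sub_comm, ← Real.dist_eq] at hxy
    have hy' : y ∈ ball c (2 * δ) :=
      (dist_triangle y x c).trans_lt (by rw [two_mul]; exact add_lt_add hxy hx)
    rw [indicator_of_mem hy', Pi.one_apply]
    linarith

lemma abs_indicator_Iio_sub_le {c δ : ℝ} (hδ : 0 < δ) (x y : ℝ) :
    |(Iio c).indicator (1 : ℝ → ℝ) x - (Iio c).indicator 1 y|
      ≤ (ball c δ).indicator 1 x + (ball c δ).indicator 1 y + (min 1 δ)⁻¹ * min 1 |x - y| := by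
  have hx := indicator_one_nonneg (ball c δ) x
  have hy := indicator_one_nonneg (ball c δ) y
  have hK : 0 ≤ (min 1 δ)⁻¹ * min 1 |x - y| := by positivity
  by_cases hxy : δ ≤ |x - y|
  · have := one_le_inv_min_one_mul_min_one hδ hxy
    have : |(Iio c).indicator (1 : ℝ → ℝ) x - (Iio c).indicator 1 y| ≤ 1 := abs_sub_le_iff.2
      ⟨by linarith [indicator_one_le_one (Iio c) x, indicator_one_nonneg (Iio c) y],
        by linarith [indicator_one_le_one (Iio c) y, indicator_one_nonneg (Iio c) x]⟩
    linarith
  rw [not_le] at hxy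
  have hxy' : |y - x| < δ := by rwa [abs_sub_comm]
  rcases lt_or_ge x c with hxc | hxc <;> rcases lt_or_ge y c with hyc | hyc
  · rw [indicator_of_mem (mem_Iio.2 hxc), indicator_of_mem (mem_Iio.2 hyc), Pi.one_apply,
      Pi.one_apply, sub_self, abs_zero]
    linarith
  · have : x ∈ ball c δ := by
      rw [mem_ball, Real.dist_eq, abs_sub_comm, abs_of_pos (sub_pos.2 hxc)]
      linarith [le_abs_self (y - x)]
    rw [indicator_of_mem (mem_Iio.2 hxc), indicator_of_notMem (notMem_Iio.2 hyc),
      indicator_of_mem this, Pi.one_apply, sub_zero, abs_one]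
    linarith
  · have : y ∈ ball c δ := by
      rw [mem_ball, Real.dist_eq, abs_sub_comm, abs_of_pos (sub_pos.2 hyc)]
      linarith [le_abs_self (x - y)]
    rw [indicator_of_notMem (notMem_Iio.2 hxc), indicator_of_mem (mem_Iio.2 hyc),
      indicator_of_mem this, Pi.one_apply, zero_sub, abs_neg, abs_one]
    linarith
  · rw [indicator_of_notMem (notMem_Iio.2 hxc), indicator_of_notMem (notMem_Iio.2 hyc), sub_self,
      abs_zero]
    linarith

lemma exists_pos_pairwiseDisjoint_ball {α : Type*} [MetricSpace α] (t : Finset α) :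
    ∃ δ > 0, (t : Set α).PairwiseDisjoint fun c => ball c δ := by
  have : ∀ᶠ δ in 𝓝[>] (0 : ℝ), ∀ x ∈ t, ∀ y ∈ t, x ≠ y → δ + δ ≤ dist x y := by
    refine (Finset.eventually_all t).2 fun x _ => (Finset.eventually_all t).2 fun y _ => ?_
    rcases eq_or_ne x y with rfl | hxy
    · exact Eventually.of_forall fun _ h => absurd rfl h
    have : ∀ᶠ δ in 𝓝[>] (0 : ℝ), δ < dist x y / 2 :=
      nhdsWithin_le_nhds (gt_mem_nhds (half_pos (dist_pos.2 hxy)))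
    exact this.mono fun δ hδ _ => by linarith
  obtain ⟨δ, hδ, hpos⟩ := (this.and self_mem_nhdsWithin).exists
  exact ⟨δ, hpos, fun x hx y hy hxy => ball_disjoint_ball (hδ x hx y hy hxy)⟩

def IsThinLevel (g : ℝ → ℝ) (c : ℝ) : Prop :=
  ∀ η > 0, ∃ δ > 0, ∃ᶠ s in atTop, ∫ t in 0..s, (ball c δ).indicator (1 : ℝ → ℝ) (g t) ≤ η * s

section Level

variable {g : ℝ → ℝ}
lemma sum_integral_indicator_ball_le (hg : Measurable g) {t : Finset ℝ} {δ s : ℝ}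
    (ht : (t : Set ℝ).PairwiseDisjoint fun c => ball c δ) (hs : 0 ≤ s) :
    ∑ c ∈ t, ∫ x in 0..s, (ball c δ).indicator (1 : ℝ → ℝ) (g x) ≤ s := by
  have hi : ∀ c ∈ t, IntervalIntegrable (fun x => (ball c δ).indicator (1 : ℝ → ℝ) (g x))
      volume 0 s := fun c _ => intervalIntegrable_indicator_comp hg measurableSet_ball _ _
  calc _ = ∫ x in 0..s, ∑ c ∈ t, (ball c δ).indicator (1 : ℝ → ℝ) (g x) :=
        (integral_finsetSum hi).symm
    _ ≤ ∫ _ in 0..s, (1 : ℝ) :=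
        integral_mono_on hs (by simpa only [Finset.sum_fn] using IntervalIntegrable.sum t hi)
          intervalIntegrable_const fun x _ => by
            rw [← Finset.indicator_biUnion_apply t _ ht]
            exact indicator_one_le_one _ _
    _ = s := by simp

lemma finite_setOf_forall_eventually_lt_integral (hg : Measurable g) {η : ℝ} (hη : 0 < η) :
    {c | ∀ δ > 0, ∀ᶠ s in atTop,
      η * s < ∫ x in 0..s, (ball c δ).indicator (1 : ℝ → ℝ) (g x)}.Finite := by
  by_contra hinf
  obtain ⟨t, hts, hcard⟩ := Set.Infinite.exists_subset_card_eq hinf (⌈η⁻¹⌉₊ + 1)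
  obtain ⟨δ, hδ, hdisj⟩ := exists_pos_pairwiseDisjoint_ball t
  obtain ⟨s, hs, hspos⟩ :=
    (((Finset.eventually_all t).2 fun c hc => hts hc δ hδ).and (eventually_gt_atTop 0)).exists
  have hsum := (Finset.sum_le_sum fun c hc => (hs c hc).le).trans
    (sum_integral_indicator_ball_le hg hdisj hspos.le)
  rw [Finset.sum_const, nsmul_eq_mul, hcard] at hsum
  have hceil : 1 < (⌈η⁻¹⌉₊ + 1 : ℕ) * η := by
    have : 1 ≤ ⌈η⁻¹⌉₊ * η := by
      rw [← inv_mul_cancel₀ hη.ne']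
      exact mul_le_mul_of_nonneg_right (Nat.le_ceil _) hη.le
    push_cast
    linarith
  nlinarith

lemma countable_setOf_not_isThinLevel (hg : Measurable g) : {c | ¬IsThinLevel g c}.Countable := by
  refine (countable_iUnion fun n : ℕ => (finite_setOf_forall_eventually_lt_integral hg
    (Nat.one_div_pos_of_nat (n := n))).countable).mono fun c (hc : ¬IsThinLevel g c) => ?_
  unfold IsThinLevel at hc
  push Not at hc
  obtain ⟨η, hη, hc⟩ := hc
  obtain ⟨n, hn⟩ := exists_nat_one_div_lt hη
  refine mem_iUnion.2 ⟨n, fun δ hδ => ?_⟩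
  filter_upwards [hc δ hδ, eventually_ge_atTop 0] with s h hs
  nlinarith

lemma exists_isThinLevel_mem_Ioo (hg : Measurable g) {a b : ℝ} (hab : a < b) :
    ∃ c ∈ Ioo a b, IsThinLevel g c := by
  obtain ⟨c, hc, hcab⟩ := ((countable_setOf_not_isThinLevel hg).dense_compl ℝ).exists_between hab
  exact ⟨c, hcab, not_not.1 hc⟩

lemma integral_indicator_ball_le_of_relDense (hg : Measurable g) {S : Set ℝ} {c δ L l A : ℝ}
    (hδ : 0 < δ) (hl : 0 ≤ l) (hS : ∀ ξ, ∃ τ ∈ S, ξ ≤ τ ∧ τ ≤ ξ + L)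
    (hA : ∀ τ ∈ S, ∀ ξ, ∫ t in ξ..ξ + l, min 1 |g t - g (t + τ)| ≤ A) (ζ : ℝ) :
    ∫ t in ζ..ζ + l, (ball c δ).indicator (1 : ℝ → ℝ) (g t)
      ≤ (∫ t in 0..L + l, (ball c (2 * δ)).indicator (1 : ℝ → ℝ) (g t)) + (min 1 δ)⁻¹ * A := by
  obtain ⟨σ, hσS, hσ₁, hσ₂⟩ := hS (-ζ)
  have hgσ : Measurable fun t => g (t + σ) := hg.comp (measurable_add_const σ)
  have hband := intervalIntegrable_indicator_comp hgσ (measurableSet_ball (x := c) (ε := 2 * δ))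
    ζ (ζ + l)
  have hdist := (intervalIntegrable_min_one_abs_sub hg.aestronglyMeasurable
    hgσ.aestronglyMeasurable ζ (ζ + l)).const_mul (min 1 δ)⁻¹
  calc ∫ t in ζ..ζ + l, (ball c δ).indicator (1 : ℝ → ℝ) (g t)
      ≤ ∫ t in ζ..ζ + l, ((ball c (2 * δ)).indicator (1 : ℝ → ℝ) (g (t + σ))
          + (min 1 δ)⁻¹ * min 1 |g t - g (t + σ)|) :=
        integral_mono_on (by linarith) (intervalIntegrable_indicator_comp hg measurableSet_ball _ _)
          (hband.add hdist) fun t _ => indicator_ball_le hδ _ _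
    _ = (∫ t in ζ + σ..ζ + l + σ, (ball c (2 * δ)).indicator (1 : ℝ → ℝ) (g t))
          + (min 1 δ)⁻¹ * ∫ t in ζ..ζ + l, min 1 |g t - g (t + σ)| := by
        rw [integral_add hband hdist, intervalIntegral.integral_const_mul,
          integral_comp_add_right (fun t => (ball c (2 * δ)).indicator (1 : ℝ → ℝ) (g t))]
    _ ≤ _ := by
        refine add_le_add ?_ (mul_le_mul_of_nonneg_left (hA σ hσS ζ) (by positivity))
        exact integral_mono_interval (by linarith) (by linarith) (by linarith)
          (Eventually.of_forall fun t => indicator_one_nonneg _ _)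
          (intervalIntegrable_indicator_comp hg measurableSet_ball _ _)

lemma integral_abs_indicator_Iio_sub_le (hg : Measurable g) {c δ l : ℝ} (hδ : 0 < δ)
    (hl : 0 ≤ l) (τ ξ : ℝ) :
    ∫ t in ξ..ξ + l, |(Iio c).indicator (1 : ℝ → ℝ) (g t) - (Iio c).indicator 1 (g (t + τ))|
      ≤ (∫ t in ξ..ξ + l, (ball c δ).indicator (1 : ℝ → ℝ) (g t))
        + (∫ t in ξ + τ..ξ + l + τ, (ball c δ).indicator (1 : ℝ → ℝ) (g t))
        + (min 1 δ)⁻¹ * ∫ t in ξ..ξ + l, min 1 |g t - g (t + τ)| := by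
  have hgτ : Measurable fun t => g (t + τ) := hg.comp (measurable_add_const τ)
  have hband := intervalIntegrable_indicator_comp hg (measurableSet_ball (x := c) (ε := δ))
    ξ (ξ + l)
  have hbandτ := intervalIntegrable_indicator_comp hgτ (measurableSet_ball (x := c) (ε := δ))
    ξ (ξ + l)
  have hdist := (intervalIntegrable_min_one_abs_sub hg.aestronglyMeasurable
    hgτ.aestronglyMeasurable ξ (ξ + l)).const_mul (min 1 δ)⁻¹
  have hχ : IntervalIntegrable
      (fun t => |(Iio c).indicator (1 : ℝ → ℝ) (g t) - (Iio c).indicator 1 (g (t + τ))|)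
      volume ξ (ξ + l) :=
    ((intervalIntegrable_indicator_comp hg measurableSet_Iio _ _).sub
      (intervalIntegrable_indicator_comp hgτ measurableSet_Iio _ _)).abs
  calc _ ≤ ∫ t in ξ..ξ + l, ((ball c δ).indicator (1 : ℝ → ℝ) (g t)
          + (ball c δ).indicator (1 : ℝ → ℝ) (g (t + τ))
          + (min 1 δ)⁻¹ * min 1 |g t - g (t + τ)|) :=
        integral_mono_on (by linarith) hχ ((hband.add hbandτ).add hdist)
          fun t _ => abs_indicator_Iio_sub_le hδ _ _
    _ = _ := by
        rw [integral_add (hband.add hbandτ) hdist, integral_add hband hbandτ,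
          intervalIntegral.integral_const_mul,
          integral_comp_add_right (fun t => (ball c δ).indicator (1 : ℝ → ℝ) (g t))]

theorem IsThinLevel.w1APr_indicator (hg : Measurable g) (hap : WAPr g) {c : ℝ}
    (hc : IsThinLevel g c) : W1APr ({t | g t < c}.indicator fun _ => 1) := by
  have hχ : ({t | g t < c}.indicator fun _ => (1 : ℝ)) = fun t => (Iio c).indicator 1 (g t) :=
    funext fun t => indicator_comp_right (s := Iio c) (g := 1) g
  rw [hχ]
  refine W1APr.of_forall_integral_le
    ((measurable_one.indicator measurableSet_Iio).comp hg).aestronglyMeasurable (M := 1)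
    (fun t => abs_le.2 ⟨neg_one_lt_zero.le.trans (indicator_one_nonneg _ _),
      indicator_one_le_one _ _⟩) fun ε hε => ?_
  set η := ε / 10
  have hη : 0 < η := by positivity
  obtain ⟨δ₀, hδ₀, hfreq⟩ := hc η hη
  set δ := δ₀ / 2
  have hδ : 0 < δ := by positivity
  set θ := η * min 1 δ
  obtain ⟨l₁, hl₁, L, hL, hS⟩ := hap.exists_relDense_integral_le (θ := θ) (by positivity)
  obtain ⟨s, hs, hsL⟩ := (hfreq.and_eventually (eventually_ge_atTop (2 * L + l₁))).exists
  set l := s - L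
  have hl₁l : l₁ ≤ l := by linarith
  have hKθ : (min 1 δ)⁻¹ * (2 * θ * l) = 2 * η * l := by
    have : 0 < min 1 δ := by positivity
    simp only [θ]
    field_simp
  have hband : ∀ ζ, ∫ t in ζ..ζ + l, (ball c δ).indicator (1 : ℝ → ℝ) (g t) ≤ 4 * η * l := by
    intro ζ
    have h := integral_indicator_ball_le_of_relDense (c := c) hg hδ (hl₁.le.trans hl₁l) hS
      (fun τ hτ => hτ l hl₁l) ζ
    rw [show 2 * δ = δ₀ by ring, show L + l = s by ring, hKθ] at h
    have : η * s ≤ η * (2 * l) := mul_le_mul_of_nonneg_left (by linarith) hη.le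
    linarith
  refine ⟨l, by linarith, RelDense.mono (fun τ hτ ξ => ?_) ⟨L, hL, hS⟩⟩
  have hbandτ := hband (ξ + τ)
  rw [add_right_comm] at hbandτ
  calc _ ≤ _ := integral_abs_indicator_Iio_sub_le hg hδ (hl₁.le.trans hl₁l) τ ξ
    _ ≤ 4 * η * l + 4 * η * l + (min 1 δ)⁻¹ * (2 * θ * l) :=
        add_le_add (add_le_add (hband ξ) hbandτ)
          (mul_le_mul_of_nonneg_left (hτ l hl₁l ξ) (by positivity))
    _ = ε * l := by rw [hKθ]; ring

end Level

theorem stmt11 (f : ℝ → ℝ) (hf : WAPr f) (a ε : ℝ) (hε : 0 < ε) :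
    ∃ T : Set ℝ, MeasurableSet T ∧
      W1APr (T.indicator fun _ => (1 : ℝ)) ∧
      (∀ t ∈ T, f t < a + ε) ∧
      (∀ᵐ t : ℝ, t ∉ T → a < f t) := by
  set g := hf.1.mk f
  have hg : Measurable g := hf.1.stronglyMeasurable_mk.measurable
  have hfg : f =ᵐ[volume] g := hf.1.ae_eq_mk
  obtain ⟨G, hGae, hGm, hfgG⟩ := hfg.exists_measurable_mem
  obtain ⟨c, ⟨hac, hca⟩, hc⟩ := exists_isThinLevel_mem_Ioo hg (lt_add_of_pos_right a hε)
  refine ⟨G ∩ {t | g t < c}, hGm.inter (measurableSet_lt hg measurable_const), ?_, ?_, ?_⟩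
  · exact (hc.w1APr_indicator hg (hf.congr_ae hfg)).congr_ae
      (indicator_ae_eq_of_ae_eq_set (inter_ae_eq_right_of_ae_eq_univ (ae_eq_univ.2 hGae)).symm)
  · rintro t ⟨htG, ht⟩
    exact hfgG t htG ▸ ht.trans hca
  · filter_upwards [hGae] with t htG htT
    rw [hfgG t htG]
    by_contra! h
    exact htT ⟨htG, h.trans_lt hac⟩
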